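/- The zeroth and first Legendre coefficients of the regularized fundamental solution G^ρ(Δ_S;·,·) are Ĝ^ρ_0 = ρ/4 and Ĝ^ρ_1 = −1/2 + ρ/4 − ρ²/24. -/

import Mathlib

/-!
Split the integrals at `t = 1 - ρ`. Below the split the profile is `(log (1 - t) + const) / (4π)`,
above it the profile is affine in `t`; both branches have elementary antiderivatives, and the
`log ρ` terms produced at the split point by the two branches cancel.
-/

open Real

/-- Zonal profile `g^ρ(t)` of the regularized fundamental solution `G^ρ(Δ_S;x,y)`
(with `t = x·y`). -/
noncomputable def grhoProfile (ρ t : ℝ) : ℝ :=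
  if t ≤ 1 - ρ then (1 / (4 * π)) * Real.log (1 - t) + (1 / (4 * π)) * (1 - Real.log 2)
  else (1 - t) / (4 * π * ρ) + (1 / (4 * π)) * (Real.log ρ - Real.log 2)

open Set MeasureTheory intervalIntegral
open scoped Interval

theorem integral_ite_le_eq_add {E : Type*} [NormedAddCommGroup E] [NormedSpace ℝ E]
    {μ : Measure ℝ} {f g : ℝ → E} {a b c : ℝ} (hac : a ≤ c) (hcb : c ≤ b)
    (hf : IntervalIntegrable f μ a c) (hg : IntervalIntegrable g μ c b) :
    ∫ t in a..b, (if t ≤ c then f t else g t) ∂μ =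
      (∫ t in a..c, f t ∂μ) + ∫ t in c..b, g t ∂μ := by
  have hlow : EqOn (fun t => if t ≤ c then f t else g t) f (Ι a c) := fun t ht => by
    rw [uIoc_of_le hac] at ht
    exact if_pos ht.2
  have hupp : EqOn (fun t => if t ≤ c then f t else g t) g (Ι c b) := fun t ht => by
    rw [uIoc_of_le hcb] at ht
    exact if_neg (not_le.2 ht.1)
  rw [← integral_add_adjacent_intervals (hf.congr hlow.symm) (hg.congr hupp.symm),
    integral_congr_ae (ae_of_all _ hlow), integral_congr_ae (ae_of_all _ hupp)]

theorem intervalIntegrable_log_one_sub (a b : ℝ) :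
    IntervalIntegrable (fun t => log (1 - t)) volume a b := by
  simpa using (intervalIntegrable_log' (a := 1 - a) (b := 1 - b)).comp_sub_left 1

theorem integral_log_one_sub_add_const (k a b : ℝ) :
    ∫ t in a..b, (log (1 - t) + k) =
      (1 - a) * log (1 - a) - (1 - b) * log (1 - b) + (k - 1) * (b - a) := by
  rw [integral_add (intervalIntegrable_log_one_sub a b) intervalIntegrable_const]
  simp only [integral_comp_sub_left, integral_log, intervalIntegral.integral_const, smul_eq_mul]
  ring

theorem integral_log_one_sub_add_const_mul (k : ℝ) {a b : ℝ} (ha : a < 1) (hb : b < 1) :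
    ∫ t in a..b, (log (1 - t) + k) * t =
      ((b ^ 2 - 1) / 2 * log (1 - b) - b / 2 - b ^ 2 / 4 + k * b ^ 2 / 2) -
        ((a ^ 2 - 1) / 2 * log (1 - a) - a / 2 - a ^ 2 / 4 + k * a ^ 2 / 2) := by
  have hF : ∀ t ∈ [[a, b]], HasDerivAt
      (fun t => (t ^ 2 - 1) / 2 * log (1 - t) - t / 2 - t ^ 2 / 4 + k * t ^ 2 / 2)
      ((log (1 - t) + k) * t) t := fun t ht => by
    have hpos : 0 < 1 - t := by linarith [ht.2, max_lt ha hb]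
    have hlog : HasDerivAt (fun t => log (1 - t)) (-1 / (1 - t)) t := by
      simpa using ((hasDerivAt_id' t).const_sub 1).log hpos.ne'
    refine ((((((hasDerivAt_pow 2 t).sub_const 1).div_const 2).mul hlog).sub
      ((hasDerivAt_id' t).div_const 2)).sub ((hasDerivAt_pow 2 t).div_const 4)).add
      (((hasDerivAt_pow 2 t).const_mul k).div_const 2) |>.congr_deriv ?_
    simp only [Nat.cast_ofNat, Nat.add_one_sub_one, pow_one]
    field_simp
    ring
  exact integral_eq_sub_of_hasDerivAt hF
    (((intervalIntegrable_log_one_sub a b).add intervalIntegrable_const).mul_continuousOn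
      (continuousOn_id' _))

theorem integral_one_sub_div_add_const (ρ k a b : ℝ) :
    ∫ t in a..b, ((1 - t) / ρ + k) =
      (-(1 - b) ^ 2 / (2 * ρ) + k * b) - (-(1 - a) ^ 2 / (2 * ρ) + k * a) := by
  have hF (t : ℝ) :
      HasDerivAt (fun t => -(1 - t) ^ 2 / (2 * ρ) + k * t) ((1 - t) / ρ + k) t := by
    refine ((((hasDerivAt_id' t).const_sub 1).pow 2).neg.div_const (2 * ρ)).add
      ((hasDerivAt_id' t).const_mul k) |>.congr_deriv ?_
    ring
  exact integral_eq_sub_of_hasDerivAt (fun t _ => hF t)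
    ((by fun_prop : Continuous _).intervalIntegrable _ _)

theorem integral_one_sub_div_add_const_mul (ρ k a b : ℝ) :
    ∫ t in a..b, ((1 - t) / ρ + k) * t =
      ((b ^ 2 / 2 - b ^ 3 / 3) / ρ + k * b ^ 2 / 2) -
        ((a ^ 2 / 2 - a ^ 3 / 3) / ρ + k * a ^ 2 / 2) := by
  have hF (t : ℝ) : HasDerivAt (fun t => (t ^ 2 / 2 - t ^ 3 / 3) / ρ + k * t ^ 2 / 2)
      (((1 - t) / ρ + k) * t) t := by
    refine ((((hasDerivAt_pow 2 t).div_const 2).sub ((hasDerivAt_pow 3 t).div_const 3)).div_const ρ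
      |>.add (((hasDerivAt_pow 2 t).const_mul k).div_const 2)).congr_deriv ?_
    ring
  exact integral_eq_sub_of_hasDerivAt (fun t _ => hF t)
    ((by fun_prop : Continuous _).intervalIntegrable _ _)

theorem grhoProfile_eq_div (ρ : ℝ) :
    grhoProfile ρ = fun t =>
      (if t ≤ 1 - ρ then log (1 - t) + (1 - log 2)
        else (1 - t) / ρ + (log ρ - log 2)) / (4 * π) := by
  ext t
  unfold grhoProfile
  split_ifs <;> ring

theorem integral_grhoProfile {ρ : ℝ} (h0 : 0 < ρ) (h2 : ρ < 2) :
    ∫ t in (-1:ℝ)..1, grhoProfile ρ t = ρ / (8 * π) := by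
  simp only [grhoProfile_eq_div, intervalIntegral.integral_div]
  rw [integral_ite_le_eq_add (by linarith) (by linarith)
      ((intervalIntegrable_log_one_sub _ _).add intervalIntegrable_const)
      ((by fun_prop : Continuous _).intervalIntegrable _ _),
    integral_log_one_sub_add_const, integral_one_sub_div_add_const]
  simp only [sub_sub_cancel, sub_neg_eq_add, one_add_one_eq_two]
  field_simp
  ring

theorem integral_grhoProfile_mul_id {ρ : ℝ} (h0 : 0 < ρ) (h2 : ρ < 2) :
    ∫ t in (-1:ℝ)..1, grhoProfile ρ t * t = (-1 / 2 + ρ / 4 - ρ ^ 2 / 24) / (2 * π) := by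
  simp only [grhoProfile_eq_div, div_mul_eq_mul_div, intervalIntegral.integral_div, ite_mul]
  rw [integral_ite_le_eq_add (by linarith) (by linarith)
      (((intervalIntegrable_log_one_sub _ _).add intervalIntegrable_const).mul_continuousOn
        (continuousOn_id' _))
      ((by fun_prop : Continuous _).intervalIntegrable _ _),
    integral_log_one_sub_add_const_mul _ (by norm_num) (by linarith),
    integral_one_sub_div_add_const_mul]
  simp only [sub_sub_cancel, sub_neg_eq_add, one_add_one_eq_two]
  field_simp
  ring

/-- The zeroth and first Legendre coefficients
`Ĝ^ρ_n = 2π ∫_{−1}^{1} g^ρ(t) P_n(t) dt` of the regularized fundamental solution are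
`Ĝ^ρ_0 = ρ/4` and `Ĝ^ρ_1 = −1/2 + ρ/4 − ρ²/24` (with `P_0(t) = 1`, `P_1(t) = t`). -/
theorem regularized_green_low_coeffs (ρ : ℝ) (hρ : ρ ∈ Set.Ioo (0:ℝ) 2) :
    2 * π * ∫ t in (-1:ℝ)..1, grhoProfile ρ t = ρ / 4 ∧
    2 * π * ∫ t in (-1:ℝ)..1, grhoProfile ρ t * t = -1/2 + ρ / 4 - ρ ^ 2 / 24 := by
  obtain ⟨h0, h2⟩ := hρ
  constructor
  · rw [integral_grhoProfile h0 h2]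
    field_simp
    norm_num
  · rw [integral_grhoProfile_mul_id h0 h2]
    field_simp
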